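/- Every pair of rational numbers (p/q, r/q) with 1 ≥ p/q ≥ r/q ≥ 0 appears exactly once in the triangular tree generated by the local inverses of the modified slow triangle map: ∪_{n ≥ −1} 𝓣ₙ = ℚ² ∩ △̄, with the union disjoint. -/

import Mathlib

/-- The local inverse `φ₀`. -/
def phi0 (z : ℚ × ℚ) : ℚ × ℚ := (1 / (1 + z.2), z.1 / (1 + z.2))

/-- The local inverse `φ₁`. -/
def phi1 (z : ℚ × ℚ) : ℚ × ℚ := (z.1 / (1 + z.2), z.2 / (1 + z.2))

/-- Interior points of the triangle `{1 ≥ x ≥ y ≥ 0}`. -/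
def isInterior (z : ℚ × ℚ) : Prop := 0 < z.2 ∧ z.2 < z.1 ∧ z.1 < 1

/-- Points generated at the next level of the tree (rules R1, R2 via `φ₁`, R4). -/
def levelUp (P : Set (ℚ × ℚ)) : Set (ℚ × ℚ) :=
  phi0 '' {z ∈ P | isInterior z} ∪ phi1 '' {z ∈ P | isInterior z} ∪
  phi1 '' {z ∈ P | z.1 = z.2} ∪
  phi0 '' {z ∈ P | z.1 = 1} ∪ phi1 '' {z ∈ P | z.1 = 1}

/-- Closure of a level under the same-level rules R2 (via `φ₂ : (x,x) ↦ (x,0)`)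
and R3 (`(x,0) ↦ (1,x)`). -/
def sameLevelClosure (Q : Set (ℚ × ℚ)) : Set (ℚ × ℚ) :=
  Q ∪ (fun z : ℚ × ℚ => (z.1, (0 : ℚ))) '' {z ∈ Q | z.1 = z.2} ∪
  (fun z : ℚ × ℚ => ((1 : ℚ), z.1)) '' {z ∈ Q | z.2 = 0} ∪
  (fun z : ℚ × ℚ => ((1 : ℚ), z.1)) ''
    ((fun z : ℚ × ℚ => (z.1, (0 : ℚ))) '' {z ∈ Q | z.1 = z.2})

/-- The levels `𝓣ₙ` (for `n ≥ 0`) of the triangular tree. -/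
def treeLevel : ℕ → Set (ℚ × ℚ)
  | 0 => {(1/2, 0), (1, 1/2), (1/2, 1/2)}
  | n + 1 => sameLevelClosure (levelUp (treeLevel n))

/-- Level `𝓣₋₁` of the tree: the vertices of the triangle. -/
def treeLevelNegOne : Set (ℚ × ℚ) := {(0, 0), (1, 0), (1, 1)}


/-!
Every non-vertex point of the triangle lies in the same levels as a point of `triangleCore`
(`0 < y ≤ x < 1`): the same-level rules tie `(t, 0)` and `(1, t)` to `(t, t)`. On the rule
domains, `φ₀` and `φ₁` are bijections onto the parts of `triangleCore` above, respectively on or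
below, the antidiagonal, so a core point lies in level `n + 1` exactly when its image under the
slow triangle map `S` lies in level `n`. The map `S` strictly decreases the common denominator of
the coordinates, and `(1/2, 1/2)` is the only core point of level `0` (with `S (1/2, 1/2) = (1, 1)`
in no level), so induction on the denominator puts every core point in exactly one level.
-/

open Set

lemma image_inter_eq_inter_preimage_of_invOn {α β : Type*} {f : α → β} {g : β → α}
    {s : Set α} {t : Set β} (h : InvOn g f s t) (hf : MapsTo f s t) (hg : MapsTo g t s)
    (u : Set α) : f '' (u ∩ s) = t ∩ g ⁻¹' u := by
  rw [h.1.image_inter', (h.bijOn hf hg).image_eq, inter_comm]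

theorem existsUnique_mem_of_descent {α : Type*} {T : ℕ → Set α} {D : Set α} (μ : α → ℕ)
    {c : α} (hc : ∀ n, c ∈ T n ↔ n = 0)
    (hD : ∀ z ∈ D, z ≠ c → z ∉ T 0 ∧ ∃ w ∈ D, μ w < μ z ∧ ∀ n, z ∈ T (n + 1) ↔ w ∈ T n) :
    ∀ z ∈ D, ∃! n, z ∈ T n := by
  intro z hz
  induction hk : μ z using Nat.strong_induction_on generalizing z with
  | _ k ih =>
    by_cases hzc : z = c
    · subst hzc
      exact ⟨0, (hc 0).2 rfl, fun n hn => (hc n).1 hn⟩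
    obtain ⟨hz0, w, hw, hlt, hzw⟩ := hD z hz hzc
    obtain ⟨n, hn, huniq⟩ := ih _ (hk ▸ hlt) w hw rfl
    refine ⟨n + 1, (hzw n).2 hn, fun m hm => ?_⟩
    cases m with
    | zero => exact absurd hm hz0
    | succ m => rw [huniq m ((hzw m).1 hm)]

def closedTriangle : Set (ℚ × ℚ) := {z | 0 ≤ z.2 ∧ z.2 ≤ z.1 ∧ z.1 ≤ 1}

def puncturedTriangle : Set (ℚ × ℚ) := closedTriangle \ treeLevelNegOne

def triangleCore : Set (ℚ × ℚ) := {z | 0 < z.2 ∧ z.2 ≤ z.1 ∧ z.1 < 1}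

lemma mem_puncturedTriangle_iff {z : ℚ × ℚ} : z ∈ puncturedTriangle ↔
    z ∈ triangleCore ∨ (0 < z.1 ∧ z.1 < 1 ∧ z.2 = 0) ∨ (z.1 = 1 ∧ 0 < z.2 ∧ z.2 < 1) := by
  obtain ⟨x, y⟩ := z
  simp only [puncturedTriangle, closedTriangle, triangleCore, treeLevelNegOne, mem_sdiff,
    mem_ofPred_eq, mem_insert_iff, mem_singleton_iff, Prod.mk.injEq]
  grind

lemma puncturedTriangle_subset_closedTriangle : puncturedTriangle ⊆ closedTriangle :=
  sdiff_subset

def psi0 (z : ℚ × ℚ) : ℚ × ℚ := (z.2 / z.1, (1 - z.1) / z.1)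

def psi1 (z : ℚ × ℚ) : ℚ × ℚ := (z.1 / (1 - z.2), z.2 / (1 - z.2))

def phi0Domain : Set (ℚ × ℚ) := {w | 0 < w.2 ∧ w.2 < w.1 ∧ w.1 ≤ 1}

def phi1Domain : Set (ℚ × ℚ) := {w | 0 < w.2 ∧ w.2 ≤ w.1 ∧ w.1 ≤ 1}

def phi0Range : Set (ℚ × ℚ) := {z | z ∈ triangleCore ∧ 1 < z.1 + z.2}

def phi1Range : Set (ℚ × ℚ) := {z | z ∈ triangleCore ∧ z.1 + z.2 ≤ 1}

lemma mapsTo_phi0 : MapsTo phi0 phi0Domain phi0Range := by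
  rintro ⟨x, y⟩ ⟨hy, hyx, hx⟩
  simp only [phi0, phi0Range, triangleCore, mem_ofPred_eq]
  have hd : (0 : ℚ) < 1 + y := by linarith
  refine ⟨⟨div_pos (by linarith) hd, by gcongr, (div_lt_one hd).2 (by linarith)⟩, ?_⟩
  rw [← add_div, one_lt_div hd]
  linarith

lemma mapsTo_psi0 : MapsTo psi0 phi0Range phi0Domain := by
  rintro ⟨x, y⟩ ⟨⟨hy, hyx, hx⟩, hs⟩
  simp only at hs
  have hx0 : 0 < x := hy.trans_le hyx
  simp only [psi0, phi0Domain, mem_ofPred_eq]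
  refine ⟨div_pos (by linarith) hx0, by gcongr; linarith, (div_le_one hx0).2 hyx⟩

lemma invOn_psi0_phi0 : InvOn psi0 phi0 phi0Domain phi0Range := by
  constructor
  · rintro ⟨x, y⟩ ⟨hy, hyx, hx⟩
    have hd : (1 : ℚ) + y ≠ 0 := by linarith
    simp only [phi0, psi0, Prod.mk.injEq]
    constructor <;> field_simp
    ring
  · rintro ⟨x, y⟩ ⟨⟨hy, hyx, hx⟩, -⟩
    have hx0 : x ≠ 0 := by linarith
    simp only [phi0, psi0, Prod.mk.injEq]
    constructor <;> field_simp <;> ring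

lemma mapsTo_phi1 : MapsTo phi1 phi1Domain phi1Range := by
  rintro ⟨x, y⟩ ⟨hy, hyx, hx⟩
  simp only [phi1, phi1Range, triangleCore, mem_ofPred_eq]
  have hd : (0 : ℚ) < 1 + y := by linarith
  refine ⟨⟨div_pos hy hd, by gcongr, (div_lt_one hd).2 (by linarith)⟩, ?_⟩
  rw [← add_div, div_le_one hd]
  linarith

lemma mapsTo_psi1 : MapsTo psi1 phi1Range phi1Domain := by
  rintro ⟨x, y⟩ ⟨⟨hy, hyx, hx⟩, hs⟩
  simp only at hs
  have hd : 0 < 1 - y := by linarith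
  simp only [psi1, phi1Domain, mem_ofPred_eq]
  refine ⟨div_pos hy hd, by gcongr, (div_le_one hd).2 (by linarith)⟩

lemma invOn_psi1_phi1 : InvOn psi1 phi1 phi1Domain phi1Range := by
  constructor
  · rintro ⟨x, y⟩ ⟨hy, hyx, hx⟩
    have hd : (1 : ℚ) + y ≠ 0 := by linarith
    simp only [phi1, psi1, Prod.mk.injEq]
    constructor <;> field_simp <;> ring
  · rintro ⟨x, y⟩ ⟨⟨hy, hyx, hx⟩, -⟩
    have hd : (1 : ℚ) - y ≠ 0 := by linarith
    simp only [phi1, psi1, Prod.mk.injEq]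
    constructor <;> field_simp <;> ring

lemma snd_mem_Ioo_of_fst_eq_one {w : ℚ × ℚ} (hw : w ∈ puncturedTriangle) (hx : w.1 = 1) :
    w.2 ∈ Ioo 0 1 := by
  rcases mem_puncturedTriangle_iff.1 hw with ⟨-, -, h⟩ | ⟨-, h, -⟩ | ⟨-, h⟩
  · exact absurd hx h.ne
  · exact absurd hx h.ne
  · exact h

lemma snd_mem_Ioo_of_fst_eq_snd {w : ℚ × ℚ} (hw : w ∈ puncturedTriangle) (hd : w.1 = w.2) :
    w.2 ∈ Ioo 0 1 := by
  rcases mem_puncturedTriangle_iff.1 hw with ⟨hy, -, hx⟩ | ⟨hx0, -, h⟩ | ⟨hx, -⟩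
  · exact ⟨hy, hd ▸ hx⟩
  · exact absurd (hd.trans h) hx0.ne'
  · exact absurd (hd ▸ hx) (snd_mem_Ioo_of_fst_eq_one hw hx).2.ne

lemma inter_phi0Domain_eq {P : Set (ℚ × ℚ)} (hP : P ⊆ puncturedTriangle) :
    P ∩ phi0Domain = {z ∈ P | isInterior z} ∪ {z ∈ P | z.1 = 1} := by
  ext w
  constructor
  · rintro ⟨hw, hy, hyx, hx⟩
    rcases hx.lt_or_eq with hx | hx
    · exact Or.inl ⟨hw, hy, hyx, hx⟩
    · exact Or.inr ⟨hw, hx⟩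
  · rintro (⟨hw, hy, hyx, hx⟩ | ⟨hw, hx⟩)
    · exact ⟨hw, hy, hyx, hx.le⟩
    · obtain ⟨hy0, hy1⟩ := snd_mem_Ioo_of_fst_eq_one (hP hw) hx
      exact ⟨hw, hy0, hx ▸ hy1, hx.le⟩

lemma inter_phi1Domain_eq {P : Set (ℚ × ℚ)} (hP : P ⊆ puncturedTriangle) :
    P ∩ phi1Domain =
      {z ∈ P | isInterior z} ∪ {z ∈ P | z.1 = z.2} ∪ {z ∈ P | z.1 = 1} := by
  ext w
  constructor
  · rintro ⟨hw, hy, hyx, hx⟩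
    rcases hyx.lt_or_eq with hyx | hyx
    · rcases hx.lt_or_eq with hx | hx
      · exact Or.inl (Or.inl ⟨hw, hy, hyx, hx⟩)
      · exact Or.inr ⟨hw, hx⟩
    · exact Or.inl (Or.inr ⟨hw, hyx.symm⟩)
  · rintro ((⟨hw, hy, hyx, hx⟩ | ⟨hw, hd⟩) | ⟨hw, hx⟩)
    · exact ⟨hw, hy, hyx.le, hx.le⟩
    · obtain ⟨hy0, hy1⟩ := snd_mem_Ioo_of_fst_eq_snd (hP hw) hd
      exact ⟨hw, hy0, hd.ge, hd ▸ hy1.le⟩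
    · obtain ⟨hy0, hy1⟩ := snd_mem_Ioo_of_fst_eq_one (hP hw) hx
      exact ⟨hw, hy0, (hx ▸ hy1).le, hx.le⟩

lemma levelUp_eq {P : Set (ℚ × ℚ)} (hP : P ⊆ puncturedTriangle) :
    levelUp P = phi0Range ∩ psi0 ⁻¹' P ∪ phi1Range ∩ psi1 ⁻¹' P := by
  rw [← image_inter_eq_inter_preimage_of_invOn invOn_psi0_phi0 mapsTo_phi0 mapsTo_psi0,
    ← image_inter_eq_inter_preimage_of_invOn invOn_psi1_phi1 mapsTo_phi1 mapsTo_psi1,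
    inter_phi0Domain_eq hP, inter_phi1Domain_eq hP, image_union, image_union, image_union, levelUp]
  ext z
  simp only [mem_union]
  tauto

lemma levelUp_subset_triangleCore {P : Set (ℚ × ℚ)} (hP : P ⊆ puncturedTriangle) :
    levelUp P ⊆ triangleCore := by
  rw [levelUp_eq hP]
  exact union_subset (fun _ h => h.1.1) (fun _ h => h.1.1)

/-- The slow triangle map `S`, inverting `φ₀` above the antidiagonal and `φ₁` on and below it. -/
def slowMap (z : ℚ × ℚ) : ℚ × ℚ := if z.1 + z.2 ≤ 1 then psi1 z else psi0 z

lemma mem_levelUp_iff {P : Set (ℚ × ℚ)} (hP : P ⊆ puncturedTriangle) {z : ℚ × ℚ}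
    (hz : z ∈ triangleCore) : z ∈ levelUp P ↔ slowMap z ∈ P := by
  rw [levelUp_eq hP, slowMap]
  split_ifs with hs
  · simp [phi0Range, phi1Range, hz, hs, not_lt_of_ge hs]
  · simp [phi0Range, phi1Range, hz, hs, lt_of_not_ge hs]

lemma mem_sameLevelClosure_iff {Q : Set (ℚ × ℚ)} (hQ : Q ⊆ triangleCore) {z : ℚ × ℚ} :
    z ∈ sameLevelClosure Q ↔
      z ∈ Q ∨ (z.2 = 0 ∧ (z.1, z.1) ∈ Q) ∨ (z.1 = 1 ∧ (z.2, z.2) ∈ Q) := by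
  obtain ⟨x, y⟩ := z
  simp only [sameLevelClosure, mem_union, mem_image, mem_sep_iff, Prod.exists, Prod.mk.injEq]
  constructor
  · rintro (((h | ⟨a, b, ⟨h, rfl⟩, rfl, rfl⟩) | ⟨a, b, ⟨h, rfl⟩, -⟩) |
      ⟨_, _, ⟨a, b, ⟨h, rfl⟩, rfl, rfl⟩, rfl, rfl⟩)
    · exact Or.inl h
    · exact Or.inr (Or.inl ⟨rfl, h⟩)
    · exact absurd (hQ h).1 (lt_irrefl 0)
    · exact Or.inr (Or.inr ⟨rfl, h⟩)
  · rintro (h | ⟨rfl, h⟩ | ⟨rfl, h⟩)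
    · exact Or.inl (Or.inl (Or.inl h))
    · exact Or.inl (Or.inl (Or.inr ⟨x, x, ⟨h, rfl⟩, rfl, rfl⟩))
    · exact Or.inr ⟨y, 0, ⟨y, y, ⟨h, rfl⟩, rfl, rfl⟩, rfl, rfl⟩

lemma sameLevelClosure_subset {Q : Set (ℚ × ℚ)} (hQ : Q ⊆ triangleCore) :
    sameLevelClosure Q ⊆ puncturedTriangle := by
  intro z hz
  rw [mem_puncturedTriangle_iff]
  rcases (mem_sameLevelClosure_iff hQ).1 hz with h | ⟨h0, h⟩ | ⟨h1, h⟩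
  · exact Or.inl (hQ h)
  · exact Or.inr (Or.inl ⟨(hQ h).1, (hQ h).2.2, h0⟩)
  · exact Or.inr (Or.inr ⟨h1, (hQ h).1, (hQ h).2.2⟩)

lemma treeLevel_subset_puncturedTriangle (n : ℕ) : treeLevel n ⊆ puncturedTriangle := by
  induction n with
  | zero =>
    simp only [treeLevel, insert_subset_iff, singleton_subset_iff, mem_puncturedTriangle_iff,
      triangleCore]
    norm_num
  | succ n ih => exact sameLevelClosure_subset (levelUp_subset_triangleCore ih)

lemma mem_treeLevel_succ_iff {n : ℕ} {z : ℚ × ℚ} :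
    z ∈ treeLevel (n + 1) ↔ z ∈ levelUp (treeLevel n) ∨
      (z.2 = 0 ∧ (z.1, z.1) ∈ levelUp (treeLevel n)) ∨
      (z.1 = 1 ∧ (z.2, z.2) ∈ levelUp (treeLevel n)) :=
  mem_sameLevelClosure_iff (levelUp_subset_triangleCore (treeLevel_subset_puncturedTriangle n))

lemma mem_treeLevel_succ_iff_slowMap {n : ℕ} {z : ℚ × ℚ} (hz : z ∈ triangleCore) :
    z ∈ treeLevel (n + 1) ↔ slowMap z ∈ treeLevel n := by
  rw [mem_treeLevel_succ_iff, ← mem_levelUp_iff (treeLevel_subset_puncturedTriangle n) hz]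
  simp [hz.1.ne', hz.2.2.ne]

lemma mk_zero_mem_treeLevel_iff (n : ℕ) (t : ℚ) :
    (t, 0) ∈ treeLevel n ↔ (t, t) ∈ treeLevel n := by
  cases n with
  | zero =>
    simp only [treeLevel, mem_insert_iff, mem_singleton_iff, Prod.mk.injEq]
    grind
  | succ n =>
    have hL := levelUp_subset_triangleCore (treeLevel_subset_puncturedTriangle n)
    have h₀ : ∀ s : ℚ, (s, 0) ∉ levelUp (treeLevel n) := fun _ h => (hL h).1.ne' rfl
    simp only [mem_treeLevel_succ_iff, h₀, true_and, false_or, and_false, or_false]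
    rw [iff_comm, or_iff_left_iff_imp]
    rintro (⟨-, h⟩ | ⟨-, h⟩) <;> exact h

lemma one_mk_mem_treeLevel_iff (n : ℕ) (t : ℚ) :
    (1, t) ∈ treeLevel n ↔ (t, t) ∈ treeLevel n := by
  cases n with
  | zero =>
    simp only [treeLevel, mem_insert_iff, mem_singleton_iff, Prod.mk.injEq]
    grind
  | succ n =>
    have hL := levelUp_subset_triangleCore (treeLevel_subset_puncturedTriangle n)
    have h₁ : ∀ s : ℚ, (1, s) ∉ levelUp (treeLevel n) := fun _ h => (hL h).2.2.ne rfl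
    simp only [mem_treeLevel_succ_iff, h₁, true_and, false_or, and_false]
    rw [iff_comm, or_iff_left_iff_imp]
    rintro (⟨-, h⟩ | ⟨-, h⟩) <;> exact h

def denLcm (z : ℚ × ℚ) : ℕ := Nat.lcm z.1.den z.2.den

lemma denLcm_pos (z : ℚ × ℚ) : 0 < denLcm z := Nat.lcm_pos z.1.den_pos z.2.den_pos

lemma denLcm_div_le (a b : ℤ) {k : ℤ} (hk : 0 < k) :
    (denLcm ((a : ℚ) / k, (b : ℚ) / k) : ℤ) ≤ k := by
  have hden : ∀ c : ℤ, (c / k : ℚ).den ∣ k.natAbs := fun c => by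
    rw [← Rat.divInt_eq_div]
    exact Int.natCast_dvd.1 (Rat.den_dvd c k)
  have := Nat.le_of_dvd (Int.natAbs_pos.2 hk.ne') (Nat.lcm_dvd (hden a) (hden b))
  simp only [denLcm]
  omega

lemma exists_eq_div_denLcm (z : ℚ × ℚ) :
    ∃ a b : ℤ, z = ((a : ℚ) / denLcm z, (b : ℚ) / denLcm z) := by
  have hq : (denLcm z : ℚ) ≠ 0 := Nat.cast_ne_zero.2 (denLcm_pos z).ne'
  have key : ∀ x : ℚ, x.den ∣ denLcm z → ∃ a : ℤ, x = a / denLcm z := by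
    rintro x ⟨m, hm⟩
    refine ⟨x.num * m, ?_⟩
    rw [eq_div_iff hq, hm]
    push_cast
    rw [← Rat.mul_den_eq_num]
    ring
  obtain ⟨a, ha⟩ := key z.1 (Nat.dvd_lcm_left _ _)
  obtain ⟨b, hb⟩ := key z.2 (Nat.dvd_lcm_right _ _)
  exact ⟨a, b, Prod.ext ha hb⟩

lemma psi0_div {a b q : ℚ} (hq : q ≠ 0) (ha : a ≠ 0) :
    psi0 (a / q, b / q) = (b / a, (q - a) / a) := by
  simp only [psi0, Prod.mk.injEq]
  constructor <;> field_simp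

lemma psi1_div {a b q : ℚ} (hq : q ≠ 0) (hb : q - b ≠ 0) :
    psi1 (a / q, b / q) = (a / (q - b), b / (q - b)) := by
  simp only [psi1, Prod.mk.injEq]
  constructor <;> field_simp

lemma denLcm_slowMap_lt {z : ℚ × ℚ} (hz : z ∈ triangleCore) :
    denLcm (slowMap z) < denLcm z := by
  obtain ⟨a, b, hab⟩ := exists_eq_div_denLcm z
  set q := denLcm z
  have hq : (0 : ℚ) < q := Nat.cast_pos.2 (denLcm_pos z)
  obtain ⟨hy, hyx, hx⟩ := hz
  rw [hab] at hy hyx hx ⊢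
  have hb : (0 : ℤ) < b := by exact_mod_cast (div_pos_iff_of_pos_right hq).1 hy
  have hba : b ≤ a := by exact_mod_cast (div_le_div_iff_of_pos_right hq).1 hyx
  have haq : a < (q : ℤ) := by exact_mod_cast (div_lt_one hq).1 hx
  rw [slowMap]
  split_ifs
  · rw [psi1_div hq.ne' (sub_ne_zero.2 (by exact_mod_cast (hba.trans_lt haq).ne'))]
    have := denLcm_div_le a b (k := q - b) (by omega)
    push_cast at this
    omega
  · rw [psi0_div hq.ne' (by exact_mod_cast (hb.trans_le hba).ne')]
    have := denLcm_div_le b (q - a) (k := a) (by omega)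
    push_cast at this
    omega

lemma mem_puncturedTriangle_of_mem_phi1Domain {w : ℚ × ℚ} (hw : w ∈ phi1Domain)
    (hw1 : w.2 < 1) : w ∈ puncturedTriangle := by
  obtain ⟨hy, hyx, hx⟩ := hw
  rw [mem_puncturedTriangle_iff]
  rcases hx.lt_or_eq with hx | hx
  · exact Or.inl ⟨hy, hyx, hx⟩
  · exact Or.inr (Or.inr ⟨hx, hy, hw1⟩)

lemma slowMap_mem_puncturedTriangle {z : ℚ × ℚ} (hz : z ∈ triangleCore)
    (hc : z ≠ (1 / 2, 1 / 2)) : slowMap z ∈ puncturedTriangle := by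
  rw [slowMap]
  split_ifs with hs
  · refine mem_puncturedTriangle_of_mem_phi1Domain (mapsTo_psi1 ⟨hz, hs⟩) ?_
    obtain ⟨hy, hyx, -⟩ := hz
    have hy2 : z.2 < 1 / 2 := by
      refine lt_of_le_of_ne (by linarith) fun h => hc (Prod.ext ?_ h)
      linarith
    show z.2 / (1 - z.2) < 1
    rw [div_lt_one (by linarith)]
    linarith
  · have hw := mapsTo_psi0 ⟨hz, lt_of_not_ge hs⟩
    exact mem_puncturedTriangle_of_mem_phi1Domain ⟨hw.1, hw.2.1.le, hw.2.2⟩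
      (hw.2.1.trans_le hw.2.2)

lemma exists_mem_triangleCore_levels_eq {z : ℚ × ℚ} (hz : z ∈ puncturedTriangle) :
    ∃ w ∈ triangleCore, denLcm w = denLcm z ∧ ∀ n, z ∈ treeLevel n ↔ w ∈ treeLevel n := by
  obtain ⟨x, y⟩ := z
  rcases mem_puncturedTriangle_iff.1 hz with h | ⟨hx0, hx1, rfl⟩ | ⟨rfl, hy0, hy1⟩
  · exact ⟨_, h, rfl, fun _ => Iff.rfl⟩
  · refine ⟨(x, x), ⟨hx0, le_rfl, hx1⟩, by simp [denLcm], fun n => ?_⟩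
    exact mk_zero_mem_treeLevel_iff n x
  · refine ⟨(y, y), ⟨hy0, le_rfl, hy1⟩, by simp [denLcm], fun n => ?_⟩
    exact one_mk_mem_treeLevel_iff n y

lemma center_mem_treeLevel_iff (n : ℕ) : ((1 / 2, 1 / 2) : ℚ × ℚ) ∈ treeLevel n ↔ n = 0 := by
  cases n with
  | zero => simp [treeLevel]
  | succ n =>
    rw [mem_treeLevel_succ_iff_slowMap (by norm_num [triangleCore])]
    have hS : slowMap ((1 / 2, 1 / 2) : ℚ × ℚ) = (1, 1) := by norm_num [slowMap, psi1]
    simp only [hS, Nat.add_one_ne_zero, iff_false]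
    exact fun h => (treeLevel_subset_puncturedTriangle n h).2 (by simp [treeLevelNegOne])

lemma existsUnique_mem_treeLevel_of_mem_triangleCore :
    ∀ z ∈ triangleCore, ∃! n, z ∈ treeLevel n := by
  refine existsUnique_mem_of_descent denLcm center_mem_treeLevel_iff fun z hz hzc => ⟨?_, ?_⟩
  · simp only [treeLevel, mem_insert_iff, mem_singleton_iff, not_or]
    refine ⟨fun h => ?_, fun h => ?_, hzc⟩
    · exact hz.1.ne' (congrArg Prod.snd h)
    · exact hz.2.2.ne (congrArg Prod.fst h)
  · obtain ⟨w, hw, hμ, hlev⟩ :=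
      exists_mem_triangleCore_levels_eq (slowMap_mem_puncturedTriangle hz hzc)
    refine ⟨w, hw, hμ ▸ denLcm_slowMap_lt hz, fun n => ?_⟩
    rw [mem_treeLevel_succ_iff_slowMap hz, hlev]

lemma existsUnique_mem_treeLevel {z : ℚ × ℚ} (hz : z ∈ puncturedTriangle) :
    ∃! n, z ∈ treeLevel n := by
  obtain ⟨w, hw, -, hlev⟩ := exists_mem_triangleCore_levels_eq hz
  simpa only [hlev] using existsUnique_mem_treeLevel_of_mem_triangleCore w hw

/-- The triangular tree is complete: every pair of rational numbers in the closed
triangle `{1 ≥ x ≥ y ≥ 0}` appears in the tree, and exactly once (the levels are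
pairwise disjoint). -/
theorem tree_complete :
    (treeLevelNegOne ∪ ⋃ n : ℕ, treeLevel n) =
      {z : ℚ × ℚ | 0 ≤ z.2 ∧ z.2 ≤ z.1 ∧ z.1 ≤ 1} ∧
    (∀ m n : ℕ, m ≠ n → Disjoint (treeLevel m) (treeLevel n)) ∧
    (∀ n : ℕ, Disjoint treeLevelNegOne (treeLevel n)) := by
  have hlevel := treeLevel_subset_puncturedTriangle
  refine ⟨?_, fun m n hmn => ?_, fun n => ?_⟩
  · change _ = closedTriangle
    refine Subset.antisymm (union_subset ?_ (iUnion_subset fun n =>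
      (hlevel n).trans puncturedTriangle_subset_closedTriangle)) fun z hz => ?_
    · simp [treeLevelNegOne, insert_subset_iff, closedTriangle]
    · by_cases hv : z ∈ treeLevelNegOne
      · exact Or.inl hv
      · exact Or.inr (mem_iUnion.2 (existsUnique_mem_treeLevel ⟨hz, hv⟩).exists)
  · exact disjoint_left.2 fun z hm hn =>
      hmn ((existsUnique_mem_treeLevel (hlevel m hm)).unique hm hn)
  · exact disjoint_left.2 fun z hv hn => (hlevel n hn).2 hv
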